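/- Let C_n be an odd cycle of length n ≥ 5. Then codeg(P_{C_n}) = 3, and hence ω(C_n) + 1 = codeg(P_{C_n}) < χ(C_n) + 1 = 4. -/

import Mathlib

open Finset

noncomputable section

/-- The dilation `kP` of a set `P ⊆ ℝ^ι`. -/
def dilate {ι : Type*} (k : ℕ) (P : Set (ι → ℝ)) : Set (ι → ℝ) :=
  (fun x => (k : ℝ) • x) '' P

/-- A point of `ℝ^ι` is a lattice point if all its coordinates are integers. -/
def IsLatticePt {ι : Type*} (x : ι → ℝ) : Prop := ∀ i, ∃ m : ℤ, x i = m

/-- The codegree of a (full-dimensional lattice) polytope `P ⊆ ℝ^ι`: the smallest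
positive integer `k` such that the interior of `kP` contains a lattice point. -/
def codeg {ι : Type*} (P : Set (ι → ℝ)) : ℕ :=
  sInf {k | 0 < k ∧ ∃ x, IsLatticePt x ∧ x ∈ interior (dilate k P)}

/-- The stable set polytope of a simple graph: the convex hull of the indicator
vectors of the stable (independent) sets of `G`. -/
def stablePolytope {V : Type*} (G : SimpleGraph V) : Set (V → ℝ) :=
  convexHull ℝ {x | ∃ S : Set V, (∀ u ∈ S, ∀ v ∈ S, ¬ G.Adj u v) ∧
    x = S.indicator (fun _ => (1 : ℝ))}


/-!
A lattice point `x` in the interior of `kP` gives the interior point `x / k` of `P`, where the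
facet inequalities `y_i ≥ 0` and `y_i + y_j ≤ 1` along an edge `ij` are strict; hence
`x_i, x_j ≥ 1` and `2 ≤ x_i + x_j < k`. Conversely, for `n = 2k + 1` the constant vector `k / n`
is the average of the `n` rotations of the stable set `{0, 2, …, 2k - 2}`. As `k / n > 1 / 3`,
the constant vector `1 / 3` lies on the half-open segment from it to an interior point of the
simplex corner `{y > 0, ∑ y < 1} ⊆ P`, so the all-ones vector is interior to `3P`.
-/

open Pointwise Filter Topology

lemma dilate_eq_smul {ι : Type*} (k : ℕ) (P : Set (ι → ℝ)) : dilate k P = (k : ℝ) • P :=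
  Set.image_smul

lemma interior_dilate {ι : Type*} {k : ℕ} (hk : k ≠ 0) (P : Set (ι → ℝ)) :
    interior (dilate k P) = (k : ℝ) • interior P := by
  rw [dilate_eq_smul, interior_smul₀ (Nat.cast_ne_zero.2 hk)]

lemma IsLatticePt.one_le_of_pos {ι : Type*} {x : ι → ℝ} (hx : IsLatticePt x) {i : ι}
    (hi : 0 < x i) : 1 ≤ x i := by
  obtain ⟨m, hm⟩ := hx i
  rw [hm] at hi ⊢
  exact_mod_cast Int.cast_pos.1 hi

lemma lt_of_mem_interior_of_forall_le {E : Type*} [AddCommGroup E] [Module ℝ E]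
    [TopologicalSpace E] [ContinuousAdd E] [ContinuousSMul ℝ E] {s : Set E} {f : E →ₗ[ℝ] ℝ}
    {c : ℝ} (hs : ∀ y ∈ s, f y ≤ c) {v : E} (hv : 0 < f v) {x : E} (hx : x ∈ interior s) :
    f x < c := by
  have hpath : Tendsto (fun t : ℝ => x + t • v) (𝓝 0) (𝓝 x) :=
    (show Continuous fun t : ℝ => x + t • v by fun_prop).tendsto' 0 x (by simp)
  obtain ⟨t, hts, ht⟩ : ∃ t : ℝ, x + t • v ∈ s ∧ 0 < t :=
    (((hpath.eventually (mem_interior_iff_mem_nhds.1 hx)).filter_mono nhdsWithin_le_nhds).and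
      (self_mem_nhdsWithin : Set.Ioi (0 : ℝ) ∈ 𝓝[>] 0)).exists
  have := hs _ hts
  rw [map_add, map_smul, smul_eq_mul] at this
  nlinarith

lemma const_mem_interior_of_le_of_lt {ι : Type*} {P : Set (ι → ℝ)} (hP : Convex ℝ P)
    {a b t : ℝ} (ha : (fun _ => a) ∈ interior P) (hb : (fun _ => b) ∈ P) (hat : a ≤ t)
    (htb : t < b) : (fun _ => t) ∈ interior P := by
  have hab : 0 < b - a := by linarith
  have := hP.add_smul_sub_mem_interior hb ha (t := (b - t) / (b - a))
    ⟨div_pos (by linarith) hab, (div_le_one hab).2 (by linarith)⟩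
  convert this using 1
  ext
  simp only [Pi.add_apply, Pi.smul_apply, Pi.sub_apply, smul_eq_mul]
  field_simp
  ring

section StablePolytope

variable {V : Type*} {G : SimpleGraph V}

lemma convex_stablePolytope : Convex ℝ (stablePolytope G) :=
  convex_convexHull ℝ _

lemma zero_mem_stablePolytope : (0 : V → ℝ) ∈ stablePolytope G :=
  subset_convexHull ℝ _ ⟨∅, by simp, by ext; simp⟩

lemma indicator_singleton_mem_stablePolytope (i : V) :
    Set.indicator {i} (fun _ => (1 : ℝ)) ∈ stablePolytope G :=
  subset_convexHull ℝ _ ⟨{i}, by rintro u rfl v rfl; exact G.irrefl, rfl⟩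

lemma le_of_mem_stablePolytope {f : (V → ℝ) →ₗ[ℝ] ℝ} {c : ℝ}
    (hf : ∀ S : Set V, (∀ u ∈ S, ∀ v ∈ S, ¬ G.Adj u v) → f (S.indicator fun _ => 1) ≤ c)
    {x : V → ℝ} (hx : x ∈ stablePolytope G) : f x ≤ c := by
  refine convexHull_min ?_ (convex_halfSpace_le f.isLinear c) hx
  rintro _ ⟨S, hS, rfl⟩
  exact hf S hS

lemma pos_of_mem_interior_stablePolytope {x : V → ℝ} (hx : x ∈ interior (stablePolytope G))
    (i : V) : 0 < x i := by
  classical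
  have hf : ∀ y ∈ stablePolytope G, (-LinearMap.proj i : (V → ℝ) →ₗ[ℝ] ℝ) y ≤ 0 :=
    fun y hy => le_of_mem_stablePolytope (fun S _ => by
      simpa using Set.indicator_nonneg (fun _ _ => zero_le_one) i) hy
  simpa using lt_of_mem_interior_of_forall_le hf (v := -Pi.single i 1) (by simp) hx

lemma add_lt_one_of_mem_interior_stablePolytope {x : V → ℝ}
    (hx : x ∈ interior (stablePolytope G)) {i j : V} (hij : G.Adj i j) : x i + x j < 1 := by
  classical
  have hf : ∀ y ∈ stablePolytope G,
      ((LinearMap.proj i : (V → ℝ) →ₗ[ℝ] ℝ) + (LinearMap.proj j : (V → ℝ) →ₗ[ℝ] ℝ)) y ≤ 1 :=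
    fun y hy => le_of_mem_stablePolytope (fun S hS => by
      have : ¬ (i ∈ S ∧ j ∈ S) := fun h => hS i h.1 j h.2 hij
      by_cases hi : i ∈ S <;> by_cases hj : j ∈ S <;> simp_all) hy
  simpa using lt_of_mem_interior_of_forall_le hf (v := Pi.single i 1) (by simp [hij.ne.symm]) hx

variable [Fintype V]

lemma mem_stablePolytope_of_nonneg_of_sum_le_one {x : V → ℝ} (hx : ∀ i, 0 ≤ x i)
    (hsum : ∑ i, x i ≤ 1) : x ∈ stablePolytope G := by
  classical
  have := (convex_stablePolytope (G := G)).sum_mem (t := (univ : Finset (Option V)))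
    (w := fun o => o.elim (1 - ∑ i, x i) x)
    (z := fun o => o.elim 0 fun i => Set.indicator {i} (fun _ => (1 : ℝ)))
    (by rintro (_ | i) _ <;> simp [hx, hsum]) (by simp [Fintype.sum_option])
    (by rintro (_ | i) _
        · exact zero_mem_stablePolytope
        · exact indicator_singleton_mem_stablePolytope i)
  convert this using 1
  ext j
  simp [Fintype.sum_option, Pi.single_apply]

lemma mem_interior_stablePolytope_of_pos_of_sum_lt_one {x : V → ℝ} (hx : ∀ i, 0 < x i)
    (hsum : ∑ i, x i < 1) : x ∈ interior (stablePolytope G) := by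
  have hopen : IsOpen {y : V → ℝ | (∀ i, 0 < y i) ∧ ∑ i, y i < 1} := by
    rw [Set.ofPred_and, Set.ofPred_forall]
    exact (isOpen_iInter_of_finite fun i => isOpen_lt continuous_const (continuous_apply i)).inter
      (isOpen_lt (continuous_finsetSum _ fun i _ => continuous_apply i) continuous_const)
  refine interior_maximal (fun y hy => ?_) hopen ⟨hx, hsum⟩
  exact mem_stablePolytope_of_nonneg_of_sum_le_one (fun i => (hy.1 i).le) hy.2.le

end StablePolytope

lemma const_mem_stablePolytope_circulantGraph {A : Type*} [AddGroup A] [Fintype A] {s : Set A}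
    {S : Finset A} (hS : ∀ u ∈ S, ∀ v ∈ S, ¬ (SimpleGraph.circulantGraph s).Adj u v) :
    (fun _ => (#S : ℝ) / Fintype.card A) ∈ stablePolytope (SimpleGraph.circulantGraph s) := by
  classical
  have htranslate (d : A) : ((· - d) ⁻¹' (S : Set A)).indicator (fun _ => (1 : ℝ)) ∈
      stablePolytope (SimpleGraph.circulantGraph s) :=
    subset_convexHull ℝ _ ⟨(· - d) ⁻¹' S, fun u hu v hv huv =>
      hS _ hu _ hv (SimpleGraph.circulantGraph_adj_translate (d := d).1 (by simpa using huv)), rfl⟩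
  have := convex_stablePolytope.sum_mem (t := univ) (w := fun _ => (1 : ℝ) / Fintype.card A)
    (fun _ _ => by positivity) (by simp) (fun d _ => htranslate d)
  convert this using 1
  ext i
  simp only [Finset.sum_apply, Pi.smul_apply, Set.indicator_apply, Set.mem_preimage, smul_eq_mul]
  rw [← Finset.mul_sum, Fintype.sum_equiv (Equiv.subLeft i)
    (fun d => if i - d ∈ (S : Set A) then 1 else 0) (fun d => if d ∈ (S : Set A) then 1 else 0)
    fun _ => rfl]
  simp [div_eq_mul_inv, mul_comm]

section Codegree

variable {V : Type*} {G : SimpleGraph V}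

lemma three_le_of_mem_interior_dilate_stablePolytope {i j : V} (hij : G.Adj i j) {k : ℕ}
    (hk : k ≠ 0) {x : V → ℝ} (hx : IsLatticePt x)
    (hxk : x ∈ interior (dilate k (stablePolytope G))) : 3 ≤ k := by
  rw [interior_dilate hk] at hxk
  obtain ⟨y, hy, rfl⟩ := hxk
  have hk' : (0 : ℝ) < k := by positivity
  have hyi : 1 ≤ (k : ℝ) * y i :=
    hx.one_le_of_pos (mul_pos hk' (pos_of_mem_interior_stablePolytope hy i))
  have hyj : 1 ≤ (k : ℝ) * y j :=
    hx.one_le_of_pos (mul_pos hk' (pos_of_mem_interior_stablePolytope hy j))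
  have : (2 : ℝ) < k := by
    nlinarith [add_lt_one_of_mem_interior_stablePolytope hy hij]
  exact_mod_cast this

lemma codeg_stablePolytope_eq_three {i j : V} (hij : G.Adj i j)
    (h : (fun _ => (1 / 3 : ℝ)) ∈ interior (stablePolytope G)) :
    codeg (stablePolytope G) = 3 := by
  have h3 : 3 ∈ {k | 0 < k ∧ ∃ x, IsLatticePt x ∧ x ∈ interior (dilate k (stablePolytope G))} := by
    refine ⟨three_pos, fun _ => 1, fun _ => ⟨1, by simp⟩, ?_⟩
    rw [interior_dilate three_ne_zero]
    exact ⟨_, h, funext fun _ => by norm_num⟩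
  refine le_antisymm (Nat.sInf_le h3) (le_csInf ⟨3, h3⟩ ?_)
  rintro k ⟨hk, x, hx, hxk⟩
  exact three_le_of_mem_interior_dilate_stablePolytope hij hk.ne' hx hxk

end Codegree

section CycleGraph

open SimpleGraph

lemma cliqueNum_eq_two_of_cliqueFree_three {V : Type*} [Finite V] {G : SimpleGraph V}
    (h3 : G.CliqueFree 3) {u v : V} (huv : G.Adj u v) : G.cliqueNum = 2 := by
  classical
  refine le_antisymm (not_lt.1 fun h => ?_) ?_
  · obtain ⟨s, hs⟩ := G.exists_isNClique_cliqueNum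
    exact h3.mono h s hs
  · have huv' : G.IsClique (({u, v} : Finset V) : Set V) := by
      rw [coe_pair]
      exact isClique_pair.2 fun _ => huv
    simpa [card_pair huv.ne] using IsClique.card_le_cliqueNum (tc := huv')

lemma cycleGraph_adj_iff_val {n : ℕ} (hn : 2 ≤ n) {u v : Fin n} :
    (cycleGraph n).Adj u v ↔ u.val + 1 = v.val ∨ v.val + 1 = u.val ∨
      (u.val = 0 ∧ v.val + 1 = n) ∨ (v.val = 0 ∧ u.val + 1 = n) := by
  have hu := u.isLt
  have hv := v.isLt
  rw [cycleGraph_adj']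
  rcases lt_trichotomy u v with h | rfl | h
  · rw [Fin.sub_val_of_le h.le, Fin.coe_sub_iff_lt.2 h]
    have : u.val < v.val := h
    omega
  · rw [Fin.sub_val_of_le le_rfl]
    omega
  · rw [Fin.sub_val_of_le h.le, Fin.coe_sub_iff_lt.2 h]
    have : v.val < u.val := h
    omega

lemma cycleGraph_cliqueFree_three {n : ℕ} (hn : 4 ≤ n) : (cycleGraph n).CliqueFree 3 := by
  classical
  rintro s hs
  obtain ⟨a, b, c, hab, hac, hbc, -⟩ := is3Clique_iff.1 hs
  rw [cycleGraph_adj_iff_val (by omega)] at hab hac hbc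
  omega

lemma exists_card_eq_isStable_cycleGraph (k : ℕ) : ∃ S : Finset (Fin (2 * k + 1)), #S = k ∧
    ∀ u ∈ S, ∀ v ∈ S, ¬ (cycleGraph (2 * k + 1)).Adj u v := by
  refine ⟨univ.image fun m : Fin k => ⟨2 * m, by have := m.isLt; omega⟩, ?_, ?_⟩
  · rw [card_image_of_injective _ fun a b hab => Fin.ext (by simpa using hab), card_fin]
  · simp only [mem_image, mem_univ, true_and]
    rintro _ ⟨a, rfl⟩ _ ⟨b, rfl⟩
    have := a.isLt
    have := b.isLt
    rw [cycleGraph_adj_iff_val (by omega)]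
    dsimp only
    omega

lemma const_mem_stablePolytope_cycleGraph (k : ℕ) :
    (fun _ => (k : ℝ) / (2 * k + 1)) ∈ stablePolytope (cycleGraph (2 * k + 1)) := by
  obtain ⟨S, hcard, hS⟩ := exists_card_eq_isStable_cycleGraph k
  rw [cycleGraph_eq_circulantGraph] at hS ⊢
  simpa [hcard] using const_mem_stablePolytope_circulantGraph hS

lemma one_third_mem_interior_stablePolytope_cycleGraph {k : ℕ} (hk : 2 ≤ k) :
    (fun _ => (1 / 3 : ℝ)) ∈ interior (stablePolytope (cycleGraph (2 * k + 1))) := by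
  have hk' : (2 : ℝ) ≤ k := by exact_mod_cast hk
  refine const_mem_interior_of_le_of_lt convex_stablePolytope (a := 1 / (2 * k + 2))
    (mem_interior_stablePolytope_of_pos_of_sum_lt_one (fun _ => by positivity) ?_)
    (const_mem_stablePolytope_cycleGraph k) ?_ ?_
  · simp only [sum_const, card_univ, Fintype.card_fin, nsmul_eq_mul]
    push_cast
    rw [mul_one_div, div_lt_one (by positivity)]
    linarith
  · rw [div_le_div_iff₀ (by positivity) (by positivity)]
    linarith
  · rw [div_lt_div_iff₀ (by positivity) (by positivity)]
    linarith

end CycleGraph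

/-- For an odd cycle `C_n` with `n ≥ 5`: `codeg(P_{C_n}) = 3`, and hence
`ω(C_n) + 1 = codeg(P_{C_n}) < χ(C_n) + 1 = 4`. -/
theorem stmt17 (n : ℕ) (hn : 5 ≤ n) (hodd : Odd n) :
    codeg (stablePolytope (SimpleGraph.cycleGraph n)) = 3 ∧
    (SimpleGraph.cycleGraph n).cliqueNum + 1 = 3 ∧
    (SimpleGraph.cycleGraph n).chromaticNumber + 1 = 4 := by
  obtain ⟨k, rfl⟩ := hodd
  have hadj : (SimpleGraph.cycleGraph (2 * k + 1)).Adj ⟨0, by omega⟩ ⟨1, by omega⟩ :=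
    (cycleGraph_adj_iff_val (by omega)).2 (Or.inl rfl)
  refine ⟨codeg_stablePolytope_eq_three hadj
    (one_third_mem_interior_stablePolytope_cycleGraph (by omega)), ?_, ?_⟩
  · rw [cliqueNum_eq_two_of_cliqueFree_three (cycleGraph_cliqueFree_three (by omega)) hadj]
  · rw [SimpleGraph.chromaticNumber_cycleGraph_of_odd _ (by omega) ⟨k, rfl⟩]
    rfl
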